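/- Let ℱ and 𝒢 be free ultrafilters on ℕ and let (θ_k) be a sequence in (0,1) with θ_k → 1⁻. Then the map f : ℓ∞ → ℝ defined by f(x) = ℱ-lim_k ( 𝒢-lim_n Θ_{θ_k,n}(x) ) is a positive continuous linear functional on ℓ∞ which extends the Cesàro mean, i.e., f ∈ Cesex. -/

import Mathlib

open Filter Topology

noncomputable section

/-- The space `ℓ∞` of bounded real sequences. -/
abbrev EllInfty : Type := lp (fun _ : ℕ => ℝ) ⊤

/-- The characteristic sequence of a set `A ⊆ ℕ` (as a plain function). -/
def chiFun (A : Set ℕ) : ℕ → ℝ := A.indicator 1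

lemma chiFun_memℓp (A : Set ℕ) : Memℓp (chiFun A) ⊤ := by
  apply memℓp_infty
  refine ⟨1, ?_⟩
  rintro r ⟨n, rfl⟩
  by_cases h : n ∈ A <;> simp [chiFun, Set.indicator, h]

/-- The characteristic sequence of a set `A ⊆ ℕ` as an element of `ℓ∞`. -/
def chi (A : Set ℕ) : EllInfty := ⟨chiFun A, chiFun_memℓp A⟩

/-- `A(n) = |A ∩ {1,…,n}|` (as a real number). -/
def count (A : Set ℕ) (n : ℕ) : ℝ := ∑ k ∈ Finset.Icc 1 n, chiFun A k

/-- `A` has asymptotic density `d`, i.e. `A(n)/n → d`. -/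
def HasDensity (A : Set ℕ) (d : ℝ) : Prop :=
  Tendsto (fun n => count A n / n) atTop (𝓝 d)

/-- A density measure: a finitely additive measure `μ : 𝒫(ℕ) → [0,1]` with `μ(ℕ) = 1`
which extends the asymptotic density. -/
def IsDensityMeasure (μ : Set ℕ → ℝ) : Prop :=
  (∀ A B : Set ℕ, Disjoint A B → μ (A ∪ B) = μ A + μ B) ∧
  (∀ A : Set ℕ, μ A ∈ Set.Icc (0 : ℝ) 1) ∧
  μ Set.univ = 1 ∧
  (∀ A d, HasDensity A d → μ A = d)

/-- The sequence of Cesàro averages `(x₁ + … + xₙ)/n`. -/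
def cesaroAvg (x : ℕ → ℝ) (n : ℕ) : ℝ := (∑ i ∈ Finset.Icc 1 n, x i) / n

/-- `x` has Cesàro mean `c`. -/
def HasCesaro (x : ℕ → ℝ) (c : ℝ) : Prop := Tendsto (cesaroAvg x) atTop (𝓝 c)

/-- A functional on `ℓ∞` is positive if it is nonnegative on nonnegative sequences. -/
def IsPositiveFunctional (f : EllInfty → ℝ) : Prop :=
  ∀ x : EllInfty, (∀ n, 0 ≤ x n) → 0 ≤ f x

/-- A functional on `ℓ∞` extends the Cesàro mean. -/
def ExtendsCesaro (f : EllInfty → ℝ) : Prop :=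
  ∀ (x : EllInfty) (c : ℝ), HasCesaro (⇑x) c → f x = c

/-- The set of positive continuous linear functionals on `ℓ∞` extending the Cesàro mean. -/
def Cesex : Set (EllInfty →L[ℝ] ℝ) :=
  {f | IsPositiveFunctional f ∧ ExtendsCesaro f}

/-- `f_C(x) = sup { f(x) : f ∈ Cesex }`. -/
def fC (x : EllInfty) : ℝ := sSup ((fun f : EllInfty →L[ℝ] ℝ => f x) '' Cesex)

/-- `Θ_{θ,n}(x) = (Σ_{θn < i ≤ n} x_i) / (n(1-θ))`. -/
def Theta (x : ℕ → ℝ) (θ : ℝ) (n : ℕ) : ℝ :=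
  (∑ i ∈ Finset.Icc 1 n, if θ * n < (i : ℝ) then x i else 0) / (n * (1 - θ))

/-- `Θ_θ(x) = limsup_{n → ∞} Θ_{θ,n}(x)`. -/
def ThetaSup (x : ℕ → ℝ) (θ : ℝ) : ℝ := limsup (Theta x θ) atTop

/-- `t(x) = lim_{θ → 1⁻} Θ_θ(x)`. -/
def tFun (x : ℕ → ℝ) : ℝ := limUnder (𝓝[<] (1 : ℝ)) (ThetaSup x)

/-- `A_α(n) = Σ_{k ∈ A, k ≤ n} k^α`. -/
def aSum (A : Set ℕ) (α : ℝ) (n : ℕ) : ℝ :=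
  ∑ k ∈ Finset.Icc 1 n, chiFun A k * (k : ℝ) ^ α

/-- The upper `α`-density `d̄_α(A) = limsup_{n→∞} A_α(n)/ℕ_α(n)`. -/
def upperADens (A : Set ℕ) (α : ℝ) : ℝ :=
  limsup (fun n => aSum A α n / aSum Set.univ α n) atTop

/-- The lower `α`-density `d̲_α(A) = liminf_{n→∞} A_α(n)/ℕ_α(n)`. -/
def lowerADens (A : Set ℕ) (α : ℝ) : ℝ :=
  liminf (fun n => aSum A α n / aSum Set.univ α n) atTop

/-- `d̄_∞(A) = lim_{α→∞} d̄_α(A)`. -/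
def dInftyUpper (A : Set ℕ) : ℝ := limUnder (atTop : Filter ℝ) (upperADens A)

/-- `d̲_∞(A) = lim_{α→∞} d̲_α(A)`. -/
def dInftyLower (A : Set ℕ) : ℝ := limUnder (atTop : Filter ℝ) (lowerADens A)

/-- The quotient `(A(n) - A(⌊θn⌋))/(n - θn)` appearing in the Pólya density. -/
def polyaQuot (A : Set ℕ) (θ : ℝ) (n : ℕ) : ℝ :=
  (count A n - count A ⌊θ * n⌋₊) / (n - θ * n)

/-- The upper Pólya density `p̄(A)`. -/
def pUpper (A : Set ℕ) : ℝ :=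
  limUnder (𝓝[<] (1 : ℝ)) (fun θ => limsup (polyaQuot A θ) atTop)

/-- The lower Pólya density `p̲(A)`. -/
def pLower (A : Set ℕ) : ℝ :=
  limUnder (𝓝[<] (1 : ℝ)) (fun θ => liminf (polyaQuot A θ) atTop)

/-- `λ̄(A) = sup { μ(A) : μ a density measure }`. -/
def lamUpper (A : Set ℕ) : ℝ := sSup {r | ∃ μ, IsDensityMeasure μ ∧ μ A = r}

/-- `λ̲(A) = inf { μ(A) : μ a density measure }`. -/
def lamLower (A : Set ℕ) : ℝ := sInf {r | ∃ μ, IsDensityMeasure μ ∧ μ A = r}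

/-- `d̄*(A) = inf { d(B) : B ⊇ A, B ∈ 𝒟 }`. -/
def dUpperStar (A : Set ℕ) : ℝ := sInf {r | ∃ B, A ⊆ B ∧ HasDensity B r}

/-- `d̲*(A) = sup { d(B) : B ⊆ A, B ∈ 𝒟 }`. -/
def dLowerStar (A : Set ℕ) : ℝ := sSup {r | ∃ B, B ⊆ A ∧ HasDensity B r}

/-- The `ℱ`-limit of a (bounded) real sequence along an ultrafilter `ℱ`:
the unique `L` with `Tendsto x ℱ (𝓝 L)` (when it exists). -/
def ulim (F : Ultrafilter ℕ) (x : ℕ → ℝ) : ℝ := limUnder (F : Filter ℕ) x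

/-- An ultrafilter is free (non-principal) iff it contains all cofinite sets. -/
def IsFreeUltrafilter (F : Ultrafilter ℕ) : Prop := (F : Filter ℕ) ≤ Filter.cofinite

/-- The set of positive functionals extending Cesàro mean, inside the weak-* dual of `ℓ∞`. -/
def CesexW : Set (WeakDual ℝ EllInfty) :=
  {f | (∀ x : EllInfty, (∀ n, 0 ≤ x n) → 0 ≤ f x) ∧
    ∀ (x : EllInfty) (c : ℝ), HasCesaro (⇑x) c → f x = c}

/-!
Each `Θ_{θ,n}` is a positive functional on `ℓ∞` of norm at most `1/(1-θ)`, and writing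
`Θ_{θ,n}(x) = (n Cₙ(x) - m Cₘ(x)) / (n(1-θ))` with `m = ⌊θn⌋ → ∞`, where `Cₙ` is the `n`-th Cesàro
average, shows that `Θ_{θ,n}(x) → C(x)` for `x ∈ Ces`. Since `𝒢` is free,
`x ↦ 𝒢-lim_n Θ_{θ,n}(x)` is therefore a positive functional extending the Cesàro mean. Such a
functional sends the constant sequence `1` to `1`, hence has norm at most `1`; so the inner limits
are uniformly bounded in `k`, and their `ℱ`-limit is again a continuous positive extension of the
Cesàro mean.
-/

lemma Theta_add (x y : ℕ → ℝ) (θ : ℝ) (n : ℕ) :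
    Theta (x + y) θ n = Theta x θ n + Theta y θ n := by
  simp only [Theta, Pi.add_apply, ← add_div, ← Finset.sum_add_distrib, ite_add_zero]

lemma Theta_smul (a : ℝ) (x : ℕ → ℝ) (θ : ℝ) (n : ℕ) :
    Theta (a • x) θ n = a * Theta x θ n := by
  simp only [Theta, Pi.smul_apply, smul_eq_mul, mul_div_assoc', Finset.mul_sum, mul_ite, mul_zero]

lemma Theta_nonneg {x : ℕ → ℝ} (hx : ∀ i, 0 ≤ x i) {θ : ℝ} (hθ : θ ≤ 1) (n : ℕ) :
    0 ≤ Theta x θ n :=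
  div_nonneg (Finset.sum_nonneg fun i _ => by split_ifs <;> simp [hx i])
    (mul_nonneg n.cast_nonneg (sub_nonneg.2 hθ))

lemma abs_Theta_le {x : ℕ → ℝ} {M : ℝ} (hx : ∀ i, |x i| ≤ M) (θ : ℝ) (n : ℕ) :
    |Theta x θ n| ≤ M * (n / |n * (1 - θ)|) := by
  rw [Theta, abs_div, mul_div_assoc']
  gcongr
  calc |∑ i ∈ Finset.Icc 1 n, if θ * n < (i : ℝ) then x i else 0|
      ≤ ∑ i ∈ Finset.Icc 1 n, |if θ * n < (i : ℝ) then x i else 0| :=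
        Finset.abs_sum_le_sum_abs _ _
    _ ≤ ∑ _i ∈ Finset.Icc 1 n, M :=
        Finset.sum_le_sum fun i _ => by
          split_ifs
          · exact hx i
          · simpa using (abs_nonneg _).trans (hx i)
    _ = M * n := by simp [mul_comm]

lemma cast_mul_cesaroAvg (x : ℕ → ℝ) (n : ℕ) :
    n * cesaroAvg x n = ∑ i ∈ Finset.Icc 1 n, x i := by
  rcases eq_or_ne n 0 with rfl | hn
  · simp
  · rw [cesaroAvg, mul_div_cancel₀ _ (Nat.cast_ne_zero.2 hn)]

-- With `m = ⌊θn⌋` the window `(θn, n]` is `{1, …, n} \ {1, …, m}`; at `n = 0` both sides are `0`.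
lemma Theta_eq_cesaroAvg (x : ℕ → ℝ) {θ : ℝ} (hθ0 : 0 ≤ θ) (hθ1 : θ ≤ 1) (n : ℕ) :
    Theta x θ n = (n * cesaroAvg x n - ⌊θ * n⌋₊ * cesaroAvg x ⌊θ * n⌋₊) / (n * (1 - θ)) := by
  set m := ⌊θ * n⌋₊
  have hmn : m ≤ n := Nat.floor_le_of_le (mul_le_of_le_one_left n.cast_nonneg hθ1)
  have hwindow : (Finset.Icc 1 n).filter (fun i : ℕ => θ * n < (i : ℝ)) = Finset.Ioc m n := by
    ext i
    simp only [Finset.mem_filter, Finset.mem_Icc, Finset.mem_Ioc, m,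
      ← Nat.floor_lt (mul_nonneg hθ0 n.cast_nonneg)]
    omega
  have hIcc (k : ℕ) : Finset.Icc 1 k = Finset.Ioc 0 k := Finset.Icc_add_one_left_eq_Ioc 0 k
  rw [Theta, cast_mul_cesaroAvg, cast_mul_cesaroAvg, ← Finset.sum_filter, hwindow, hIcc, hIcc,
    ← Finset.sum_Ioc_consecutive x m.zero_le hmn, add_sub_cancel_left]

lemma tendsto_Theta_of_hasCesaro {x : ℕ → ℝ} {c : ℝ} (hx : HasCesaro x c) {θ : ℝ}
    (hθ : θ ∈ Set.Ioo 0 1) : Tendsto (Theta x θ) atTop (𝓝 c) := by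
  obtain ⟨hθ0, hθ1⟩ := hθ
  have hfloor : Tendsto (fun n : ℕ => ⌊θ * n⌋₊) atTop atTop :=
    tendsto_nat_floor_atTop.comp (tendsto_natCast_atTop_atTop.const_mul_atTop hθ0)
  have hratio : Tendsto (fun n : ℕ => (⌊θ * n⌋₊ : ℝ) / n) atTop (𝓝 θ) :=
    (tendsto_nat_floor_mul_div_atTop hθ0.le).comp tendsto_natCast_atTop_atTop
  have hlim := (hx.sub (hratio.mul (hx.comp hfloor))).div_const (1 - θ)
  rw [show (c - θ * c) / (1 - θ) = c by field_simp [(sub_pos.2 hθ1).ne']] at hlim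
  refine hlim.congr' ?_
  filter_upwards [eventually_ne_atTop 0] with n hn
  rw [Theta_eq_cesaroAvg x hθ0.le hθ1.le]
  field_simp [Nat.cast_ne_zero.2 hn, (sub_pos.2 hθ1).ne']
  rfl

lemma abs_apply_le_norm (x : EllInfty) (i : ℕ) : |x i| ≤ ‖x‖ := by
  simpa using lp.norm_apply_le_norm ENNReal.top_ne_zero x i

def thetaCLM (θ : ℝ) (n : ℕ) : EllInfty →L[ℝ] ℝ :=
  LinearMap.mkContinuous
    { toFun := fun x => Theta x θ n
      map_add' := fun x y => Theta_add x y θ n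
      map_smul' := fun a x => Theta_smul a x θ n }
    (n / |n * (1 - θ)|) fun x =>
      (abs_Theta_le (abs_apply_le_norm x) θ n).trans_eq (mul_comm _ _)

lemma thetaCLM_apply (θ : ℝ) (n : ℕ) (x : EllInfty) : thetaCLM θ n x = Theta x θ n := rfl

lemma norm_thetaCLM_le {θ : ℝ} (hθ : θ < 1) (n : ℕ) : ‖thetaCLM θ n‖ ≤ 1 / (1 - θ) := by
  have h1θ : 0 < 1 - θ := sub_pos.2 hθ
  have hcoef : (n : ℝ) / |n * (1 - θ)| ≤ 1 / (1 - θ) := by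
    rcases eq_or_ne n 0 with rfl | hn
    · simp [h1θ.le]
    · rw [abs_of_pos (by positivity)]
      field_simp
      rfl
  refine ContinuousLinearMap.opNorm_le_bound _ (by positivity) fun x => ?_
  rw [thetaCLM_apply, Real.norm_eq_abs]
  exact (abs_Theta_le (abs_apply_le_norm x) θ n).trans (by nlinarith [norm_nonneg x])

lemma chi_univ_apply (n : ℕ) : chi Set.univ n = 1 := by
  simp [chi, chiFun]

lemma hasCesaro_chi_univ : HasCesaro (chi Set.univ) 1 := by
  refine tendsto_const_nhds.congr' ?_
  filter_upwards [eventually_ne_atTop 0] with n hn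
  simp [cesaroAvg, chi_univ_apply, Nat.cast_ne_zero.2 hn]

lemma IsPositiveFunctional.norm_le {f : EllInfty →L[ℝ] ℝ} (hf : IsPositiveFunctional f) :
    ‖f‖ ≤ f (chi Set.univ) := by
  refine ContinuousLinearMap.opNorm_le_bound _ (hf _ fun n => by simp [chi_univ_apply])
    fun x => ?_
  have hupper := hf (‖x‖ • chi Set.univ - x) fun n => by
    simp only [lp.coeFn_sub, lp.coeFn_smul, Pi.sub_apply, Pi.smul_apply, chi_univ_apply]
    linarith [abs_le.1 (abs_apply_le_norm x n), smul_eq_mul ‖x‖ (1 : ℝ)]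
  have hlower := hf (‖x‖ • chi Set.univ + x) fun n => by
    simp only [lp.coeFn_add, lp.coeFn_smul, Pi.add_apply, Pi.smul_apply, chi_univ_apply]
    linarith [abs_le.1 (abs_apply_le_norm x n), smul_eq_mul ‖x‖ (1 : ℝ)]
  simp only [map_sub, map_add, map_smul, smul_eq_mul] at hupper hlower
  rw [Real.norm_eq_abs, abs_le]
  constructor <;> linarith

lemma norm_le_one_of_mem_Cesex {f : EllInfty →L[ℝ] ℝ} (hf : f ∈ Cesex) : ‖f‖ ≤ 1 :=
  hf.1.norm_le.trans_eq (hf.2 _ _ hasCesaro_chi_univ)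

lemma tendsto_ulim_of_abs_le (F : Ultrafilter ℕ) {x : ℕ → ℝ} {C : ℝ} (hx : ∀ n, |x n| ≤ C) :
    Tendsto x F (𝓝 (ulim F x)) := by
  have hmem : Set.Icc (-C) C ∈ F.map x :=
    Ultrafilter.mem_map.2 (univ_mem' fun n => abs_le.1 (hx n))
  obtain ⟨a, -, ha⟩ := isCompact_Icc.ultrafilter_le_nhds (F.map x) (le_principal_iff.2 hmem)
  exact tendsto_nhds_limUnder ⟨a, ha⟩

section UltrafilterLimit

variable {E : Type*} [SeminormedAddCommGroup E] [NormedSpace ℝ E] (F : Ultrafilter ℕ)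
  {φ : ℕ → E →L[ℝ] ℝ}

lemma tendsto_ulim_apply (hφ : ∃ C, ∀ k, ‖φ k‖ ≤ C) (x : E) :
    Tendsto (fun k => φ k x) F (𝓝 (ulim F fun k => φ k x)) := by
  obtain ⟨C, hC⟩ := hφ
  exact tendsto_ulim_of_abs_le F fun k => (φ k).le_of_opNorm_le (hC k) x

def ulimCLM (φ : ℕ → E →L[ℝ] ℝ) (hφ : ∃ C, ∀ k, ‖φ k‖ ≤ C) : E →L[ℝ] ℝ :=
  LinearMap.mkContinuousOfExistsBound
    { toFun := fun x => ulim F fun k => φ k x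
      map_add' := fun x y =>
        (((tendsto_ulim_apply F hφ x).add (tendsto_ulim_apply F hφ y)).congr fun k =>
          (map_add (φ k) x y).symm).limUnder_eq
      map_smul' := fun a x =>
        (((tendsto_ulim_apply F hφ x).const_mul a).congr fun k =>
          (map_smul (φ k) a x).symm).limUnder_eq }
    (by
      obtain ⟨C, hC⟩ := hφ
      exact ⟨C, fun x => le_of_tendsto (tendsto_ulim_apply F ⟨C, hC⟩ x).norm
        (Eventually.of_forall fun k => (φ k).le_of_opNorm_le (hC k) x)⟩)

lemma ulimCLM_apply_eq_of_tendsto (hφ : ∃ C, ∀ k, ‖φ k‖ ≤ C) {x : E} {c : ℝ}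
    (h : Tendsto (fun k => φ k x) F (𝓝 c)) : ulimCLM F φ hφ x = c :=
  h.limUnder_eq

end UltrafilterLimit

lemma IsPositiveFunctional.ulimCLM (F : Ultrafilter ℕ) {φ : ℕ → EllInfty →L[ℝ] ℝ}
    (hφ : ∃ C, ∀ k, ‖φ k‖ ≤ C) (hpos : ∀ k, IsPositiveFunctional (φ k)) :
    IsPositiveFunctional (ulimCLM F φ hφ) := fun x hx =>
  ge_of_tendsto (tendsto_ulim_apply F hφ x) (Eventually.of_forall fun k => hpos k x hx)

lemma ulimCLM_mem_Cesex (F : Ultrafilter ℕ) {φ : ℕ → EllInfty →L[ℝ] ℝ} (hφ : ∀ k, φ k ∈ Cesex) :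
    ulimCLM F φ ⟨1, fun k => norm_le_one_of_mem_Cesex (hφ k)⟩ ∈ Cesex :=
  ⟨.ulimCLM F _ fun k => (hφ k).1, fun x c hc =>
    ulimCLM_apply_eq_of_tendsto F _ (tendsto_const_nhds.congr fun k => ((hφ k).2 x c hc).symm)⟩

lemma ulimCLM_thetaCLM_mem_Cesex {G : Ultrafilter ℕ} (hG : IsFreeUltrafilter G) {θ : ℝ}
    (hθ : θ ∈ Set.Ioo 0 1) : ulimCLM G (thetaCLM θ) ⟨_, norm_thetaCLM_le hθ.2⟩ ∈ Cesex :=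
  ⟨.ulimCLM G _ fun n _ hx => Theta_nonneg hx hθ.2.le n, fun _ _ hc =>
    ulimCLM_apply_eq_of_tendsto G _
      ((tendsto_Theta_of_hasCesaro hc hθ).mono_left (Nat.cofinite_eq_atTop ▸ hG))⟩

theorem stmt16_general (θs : ℕ → ℝ) (hθ : ∀ k, θs k ∈ Set.Ioo (0 : ℝ) 1)
    (F : Ultrafilter ℕ) (G : Ultrafilter ℕ) (hG : IsFreeUltrafilter G) :
    ∃ f : EllInfty →L[ℝ] ℝ, f ∈ Cesex ∧
      ∀ x : EllInfty, f x = ulim F (fun k => ulim G (fun n => Theta (⇑x) (θs k) n)) :=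
  ⟨_, ulimCLM_mem_Cesex F fun k => ulimCLM_thetaCLM_mem_Cesex hG (hθ k), fun _ => rfl⟩

/-- For free ultrafilters `ℱ, 𝒢` and a sequence `θ_k → 1⁻` in `(0,1)`, the map
`x ↦ ℱ-lim_k 𝒢-lim_n Θ_{θ_k,n}(x)` is a positive continuous linear functional
on `ℓ∞` extending the Cesàro mean. -/
theorem stmt16 (θs : ℕ → ℝ) (hθ : ∀ k, θs k ∈ Set.Ioo (0 : ℝ) 1)
    (hθlim : Tendsto θs atTop (𝓝 1)) (F : Ultrafilter ℕ) (hF : IsFreeUltrafilter F)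
    (G : Ultrafilter ℕ) (hG : IsFreeUltrafilter G) :
    ∃ f : EllInfty →L[ℝ] ℝ, f ∈ Cesex ∧
      ∀ x : EllInfty, f x = ulim F (fun k => ulim G (fun n => Theta (⇑x) (θs k) n)) :=
  stmt16_general θs hθ F G hG
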